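/- arXiv:2105.12864 — 2 statements merged into one kernel-verified Lean document; each statement's English description precedes it below -/
import Mathlib

section
/- Let D be a finite connected subgraph of Z^2 with at least one vertex, and let bb(D) be its bounding box, i.e., the subgraph induced by {(x,y) : m_x ≤ x ≤ M_x, m_y ≤ y ≤ M_y} where m_x, M_x, m_y, M_y are the minimum and maximum coordinates of vertices of D. Then |∂ bb(D)| ≤ |∂ D|. -/
open SimpleGraph

/-- The square lattice `ℤ²`. -/
def Grid : SimpleGraph (ℤ × ℤ) where
  Adj u v := |u.1 - v.1| + |u.2 - v.2| = 1
  symm := by constructor; intro u v h; simpa [abs_sub_comm] using h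
  loopless := by constructor; intro u h; simp at h

/-- The edge boundary of a subgraph `H` of `ℤ²`: edges of the lattice not in `H`
but incident to a vertex of `H`. -/
def edgeBoundary (H : Grid.Subgraph) : Set (Sym2 (ℤ × ℤ)) :=
  {e | e ∈ Grid.edgeSet ∧ e ∉ H.edgeSet ∧ ∃ v ∈ H.verts, v ∈ e}
/-- The box subgraph induced on `{(x,y) : a ≤ x ≤ b, c ≤ y ≤ d}`. -/
def boxSubgraph (a b c d : ℤ) : Grid.Subgraph :=
  (⊤ : Grid.Subgraph).induce {p | a ≤ p.1 ∧ p.1 ≤ b ∧ c ≤ p.2 ∧ p.2 ≤ d}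

/-- Bounding box of a set of vertices: the induced subgraph on the smallest
coordinate-aligned rectangle containing it. -/
noncomputable def bbox (S : Set (ℤ × ℤ)) : Grid.Subgraph :=
  boxSubgraph (sInf (Prod.fst '' S)) (sSup (Prod.fst '' S))
    (sInf (Prod.snd '' S)) (sSup (Prod.snd '' S))

lemma abs_add_abs_eq_one {a b : ℤ} : |a| + |b| = 1 ↔
    (a = 1 ∧ b = 0) ∨ (a = -1 ∧ b = 0) ∨ (a = 0 ∧ b = 1) ∨ (a = 0 ∧ b = -1) := by
  rcases abs_cases a with ⟨h1, h2⟩ | ⟨h1, h2⟩ <;>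
    rcases abs_cases b with ⟨h3, h4⟩ | ⟨h3, h4⟩ <;> omega

lemma grid_adj_iff {p q : ℤ × ℤ} : Grid.Adj p q ↔
    q = (p.1 + 1, p.2) ∨ q = (p.1 - 1, p.2) ∨ q = (p.1, p.2 + 1) ∨ q = (p.1, p.2 - 1) := by
  show |p.1 - q.1| + |p.2 - q.2| = 1 ↔ _
  rw [abs_add_abs_eq_one]
  rcases p with ⟨px, py⟩; rcases q with ⟨qx, qy⟩
  simp only [Prod.mk.injEq]
  omega

lemma walk_ivt (D : Grid.Subgraph) (f : ℤ × ℤ → ℤ)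
    (hf : ∀ p q : ℤ × ℤ, Grid.Adj p q → f q ≤ f p + 1) :
    ∀ {u v : D.verts} (_ : D.coe.Walk u v) (x : ℤ), f u ≤ x → x ≤ f v →
      ∃ p ∈ D.verts, f p = x := by
  intro u v w
  induction w with
  | nil => exact fun x h1 h2 => ⟨_, Subtype.mem _, le_antisymm h1 h2⟩
  | @cons u u' v h w ih =>
    intro x h1 h2
    by_cases hx : f u' ≤ x
    · exact ih x hx h2
    · push_neg at hx
      have hadj : Grid.Adj (u : ℤ × ℤ) (u' : ℤ × ℤ) := D.coe_adj_sub _ _ h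
      have := hf _ _ hadj
      exact ⟨u, u.2, by omega⟩

lemma exists_vert (D : Grid.Subgraph) (hconn : D.Connected) (f : ℤ × ℤ → ℤ)
    (hf : ∀ p q : ℤ × ℤ, Grid.Adj p q → f q ≤ f p + 1)
    {u v : ℤ × ℤ} (hu : u ∈ D.verts) (hv : v ∈ D.verts) (x : ℤ)
    (h1 : f u ≤ x) (h2 : x ≤ f v) : ∃ p ∈ D.verts, f p = x := by
  obtain ⟨w⟩ := hconn.preconnected ⟨u, hu⟩ ⟨v, hv⟩
  exact walk_ivt D f hf w x h1 h2

lemma edgeBoundary_finite (D : Grid.Subgraph) (hfin : D.verts.Finite) :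
    (edgeBoundary D).Finite := by
  set N : Set (ℤ × ℤ) := D.verts ∪ (fun v : ℤ × ℤ => (v.1 + 1, v.2)) '' D.verts ∪
      (fun v : ℤ × ℤ => (v.1 - 1, v.2)) '' D.verts ∪
      (fun v : ℤ × ℤ => (v.1, v.2 + 1)) '' D.verts ∪
      (fun v : ℤ × ℤ => (v.1, v.2 - 1)) '' D.verts with hN
  have hNfin : N.Finite := by
    refine (((((hfin.union (hfin.image _)).union (hfin.image _)).union
      (hfin.image _)).union (hfin.image _)))
  have hnbr : ∀ p q : ℤ × ℤ, Grid.Adj p q → p ∈ D.verts → q ∈ N := by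
    intro p q hadj hp
    rcases grid_adj_iff.mp hadj with h | h | h | h
    · exact Or.inl (Or.inl (Or.inl (Or.inr ⟨p, hp, h.symm⟩)))
    · exact Or.inl (Or.inl (Or.inr ⟨p, hp, h.symm⟩))
    · exact Or.inl (Or.inr ⟨p, hp, h.symm⟩)
    · exact Or.inr ⟨p, hp, h.symm⟩
  have hsub : edgeBoundary D ⊆ Function.uncurry Sym2.mk '' (N ×ˢ N) := by
    intro e he
    obtain ⟨hg, -, v, hv, hve⟩ := he
    obtain ⟨⟨p, q⟩, rfl⟩ := Quot.exists_rep e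
    have hadj : Grid.Adj p q := hg
    have hvN : v ∈ N := Or.inl (Or.inl (Or.inl (Or.inl hv)))
    rcases Sym2.mem_iff.mp hve with rfl | rfl
    · exact ⟨(v, q), ⟨hvN, hnbr _ _ hadj hv⟩, rfl⟩
    · exact ⟨(p, v), ⟨hnbr _ _ hadj.symm hv, hvN⟩, rfl⟩
  exact ((hNfin.prod hNfin).image _).subset hsub

/-- For a finite connected nonempty subgraph `D` of `ℤ²`, the edge boundary of its
bounding box is at most the edge boundary of `D`. -/
theorem edgeBoundary_bbox_le (D : Grid.Subgraph) (hconn : D.Connected)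
    (hfin : D.verts.Finite) (hne : D.verts.Nonempty) :
    (edgeBoundary (bbox D.verts)).ncard ≤ (edgeBoundary D).ncard := by
  classical
  set V := D.verts with hV
  set a := sInf (Prod.fst '' V) with ha
  set b := sSup (Prod.fst '' V) with hb
  set c := sInf (Prod.snd '' V) with hc
  set d := sSup (Prod.snd '' V) with hd
  have hffin : (Prod.fst '' V).Finite := hfin.image _
  have hsfin : (Prod.snd '' V).Finite := hfin.image _
  have hfne : (Prod.fst '' V).Nonempty := hne.image _
  have hsne : (Prod.snd '' V).Nonempty := hne.image _
  -- bounds for vertices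
  have habV : ∀ p ∈ V, a ≤ p.1 ∧ p.1 ≤ b ∧ c ≤ p.2 ∧ p.2 ≤ d := by
    intro p hp
    exact ⟨csInf_le hffin.bddBelow ⟨p, hp, rfl⟩, le_csSup hffin.bddAbove ⟨p, hp, rfl⟩,
      csInf_le hsfin.bddBelow ⟨p, hp, rfl⟩, le_csSup hsfin.bddAbove ⟨p, hp, rfl⟩⟩
  -- step bounds for the two coordinates
  have hstep1 : ∀ p q : ℤ × ℤ, Grid.Adj p q → q.1 ≤ p.1 + 1 := by
    intro p q h
    rcases grid_adj_iff.mp h with h | h | h | h <;> subst h <;> simp <;> omega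
  have hstep2 : ∀ p q : ℤ × ℤ, Grid.Adj p q → q.2 ≤ p.2 + 1 := by
    intro p q h
    rcases grid_adj_iff.mp h with h | h | h | h <;> subst h <;> simp <;> omega
  -- every column in [a,b] contains a vertex
  have hcol : ∀ x, a ≤ x → x ≤ b → ∃ y, (x, y) ∈ V := by
    obtain ⟨u, hu, hua⟩ := hfne.csInf_mem hffin
    obtain ⟨v, hv, hvb⟩ := hfne.csSup_mem hffin
    intro x hax hxb
    obtain ⟨p, hp, hpx⟩ := exists_vert D hconn Prod.fst hstep1 hu hv x
      (by rw [hua]; exact hax) (by rw [hvb]; exact hxb)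
    exact ⟨p.2, by rwa [← hpx]⟩
  have hrow : ∀ y, c ≤ y → y ≤ d → ∃ x, (x, y) ∈ V := by
    obtain ⟨u, hu, hua⟩ := hsne.csInf_mem hsfin
    obtain ⟨v, hv, hvb⟩ := hsne.csSup_mem hsfin
    intro y hcy hyd
    obtain ⟨p, hp, hpy⟩ := exists_vert D hconn Prod.snd hstep2 hu hv y
      (by rw [hua]; exact hcy) (by rw [hvb]; exact hyd)
    exact ⟨p.1, by rwa [← hpy]⟩
  -- column extremes
  set ymin : ℤ → ℤ := fun x => sInf {y | (x, y) ∈ V} with hymin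
  set ymax : ℤ → ℤ := fun x => sSup {y | (x, y) ∈ V} with hymax
  set xmin : ℤ → ℤ := fun y => sInf {x | (x, y) ∈ V} with hxmin
  set xmax : ℤ → ℤ := fun y => sSup {x | (x, y) ∈ V} with hxmax
  have hcolpack : ∀ x, a ≤ x → x ≤ b →
      (x, ymin x) ∈ V ∧ (x, ymax x) ∈ V ∧ (x, ymin x - 1) ∉ V ∧ (x, ymax x + 1) ∉ V ∧
        ymin x ≤ ymax x := by
    intro x hax hxb
    have hCfin : {y | (x, y) ∈ V}.Finite := by
      have : {y | (x, y) ∈ V} = (fun y => (x, y)) ⁻¹' V := rfl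
      rw [this]
      exact Set.Finite.preimage (fun y _ z _ h => congrArg Prod.snd h) hfin
    have hCne : {y | (x, y) ∈ V}.Nonempty := hcol x hax hxb
    have h1 : ymin x ∈ {y | (x, y) ∈ V} := hCne.csInf_mem hCfin
    have h2 : ymax x ∈ {y | (x, y) ∈ V} := hCne.csSup_mem hCfin
    refine ⟨h1, h2, ?_, ?_, csInf_le_csSup hCne hCfin.bddBelow hCfin.bddAbove⟩
    · intro hmem
      have h := csInf_le hCfin.bddBelow hmem
      have h' : sInf {y | (x, y) ∈ V} = ymin x := rfl
      rw [h'] at h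
      omega
    · intro hmem
      have h := le_csSup hCfin.bddAbove hmem
      have h' : sSup {y | (x, y) ∈ V} = ymax x := rfl
      rw [h'] at h
      omega
  have hrowpack : ∀ y, c ≤ y → y ≤ d →
      (xmin y, y) ∈ V ∧ (xmax y, y) ∈ V ∧ (xmin y - 1, y) ∉ V ∧ (xmax y + 1, y) ∉ V ∧
        xmin y ≤ xmax y := by
    intro y hcy hyd
    have hCfin : {x | (x, y) ∈ V}.Finite := by
      have : {x | (x, y) ∈ V} = (fun x => (x, y)) ⁻¹' V := rfl
      rw [this]
      exact Set.Finite.preimage (fun x _ z _ h => congrArg Prod.fst h) hfin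
    have hCne : {x | (x, y) ∈ V}.Nonempty := hrow y hcy hyd
    have h1 : xmin y ∈ {x | (x, y) ∈ V} := hCne.csInf_mem hCfin
    have h2 : xmax y ∈ {x | (x, y) ∈ V} := hCne.csSup_mem hCfin
    refine ⟨h1, h2, ?_, ?_, csInf_le_csSup hCne hCfin.bddBelow hCfin.bddAbove⟩
    · intro hmem
      have h := csInf_le hCfin.bddBelow hmem
      have h' : sInf {x | (x, y) ∈ V} = xmin y := rfl
      rw [h'] at h
      omega
    · intro hmem
      have h := le_csSup hCfin.bddAbove hmem
      have h' : sSup {x | (x, y) ∈ V} = xmax y := rfl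
      rw [h'] at h
      omega
  -- the four sides of the box boundary
  set Bot : Set (Sym2 (ℤ × ℤ)) := (fun x => s((x, c), (x, c - 1))) '' Set.Icc a b with hBot
  set Top : Set (Sym2 (ℤ × ℤ)) := (fun x => s((x, d), (x, d + 1))) '' Set.Icc a b with hTop
  set Lft : Set (Sym2 (ℤ × ℤ)) := (fun y => s((a, y), (a - 1, y))) '' Set.Icc c d with hLft
  set Rgt : Set (Sym2 (ℤ × ℤ)) := (fun y => s((b, y), (b + 1, y))) '' Set.Icc c d with hRgt
  -- the four injected families inside ∂D
  set B' : Set (Sym2 (ℤ × ℤ)) :=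
    (fun x => s((x, ymin x), (x, ymin x - 1))) '' Set.Icc a b with hB'
  set T' : Set (Sym2 (ℤ × ℤ)) :=
    (fun x => s((x, ymax x), (x, ymax x + 1))) '' Set.Icc a b with hT'
  set L' : Set (Sym2 (ℤ × ℤ)) :=
    (fun y => s((xmin y, y), (xmin y - 1, y))) '' Set.Icc c d with hL'
  set R' : Set (Sym2 (ℤ × ℤ)) :=
    (fun y => s((xmax y, y), (xmax y + 1, y))) '' Set.Icc c d with hR'
  -- the box boundary is inside the four sides
  have hbbox : bbox V = boxSubgraph a b c d := rfl
  set S : Set (ℤ × ℤ) := {p | a ≤ p.1 ∧ p.1 ≤ b ∧ c ≤ p.2 ∧ p.2 ≤ d} with hS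
  have hside : ∀ p q : ℤ × ℤ, Grid.Adj p q → p ∈ S → q ∉ S →
      s(p, q) ∈ Bot ∪ Top ∪ Lft ∪ Rgt := by
    intro p q hadj hp hq
    obtain ⟨hpa, hpb, hpc, hpd⟩ := hp
    rcases grid_adj_iff.mp hadj with h | h | h | h <;> subst h <;>
        simp only [hS, Set.mem_setOf_eq, not_and, not_le] at hq
    · -- q = (p.1+1, p.2): right side
      have hpb' : p.1 = b := by
        have := hq (by omega)
        omega
      exact Or.inr ⟨p.2, ⟨hpc, hpd⟩, by rw [← hpb']⟩
    · -- left side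
      have hpa' : p.1 = a := by
        by_contra h
        have h1 : a ≤ p.1 - 1 := by omega
        have := hq h1 (by omega) (by omega)
        omega
      exact Or.inl (Or.inr ⟨p.2, ⟨hpc, hpd⟩, by rw [← hpa']⟩)
    · -- top side
      have hpd' : p.2 = d := by
        have := hq (by omega) (by omega) (by omega)
        omega
      exact Or.inl (Or.inl (Or.inr ⟨p.1, ⟨hpa, hpb⟩, by rw [← hpd']⟩))
    · -- bottom side
      have hpc' : p.2 = c := by
        by_contra h
        have := hq (by omega) (by omega) (by omega)
        omega
      exact Or.inl (Or.inl (Or.inl ⟨p.1, ⟨hpa, hpb⟩, by rw [← hpc']⟩))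
  have hsub1 : edgeBoundary (bbox V) ⊆ Bot ∪ Top ∪ Lft ∪ Rgt := by
    rw [hbbox]
    intro e he
    obtain ⟨hg, hnb, v, hv, hve⟩ := he
    obtain ⟨⟨p, q⟩, rfl⟩ := Quot.exists_rep e
    have hadj : Grid.Adj p q := hg
    have hnadj : ¬(boxSubgraph a b c d).Adj p q := fun h => hnb (Subgraph.mem_edgeSet.mpr h)
    have hnboth : ¬(p ∈ S ∧ q ∈ S) := by
      rintro ⟨h1, h2⟩
      exact hnadj ⟨h1, h2, hadj⟩
    have hvS : v ∈ S := hv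
    show s(p, q) ∈ Bot ∪ Top ∪ Lft ∪ Rgt
    rcases Sym2.mem_iff.mp hve with rfl | rfl
    · exact hside v q hadj hvS (fun hq => hnboth ⟨hvS, hq⟩)
    · rw [Sym2.eq_swap]
      exact hside v p hadj.symm hvS (fun hp => hnboth ⟨hp, hvS⟩)
  -- the injected families lie in ∂D
  have hB'sub : B' ⊆ edgeBoundary D := by
    rintro e ⟨x, hx, rfl⟩
    obtain ⟨h1, -, h3, -, -⟩ := hcolpack x hx.1 hx.2
    refine ⟨?_, ?_, (x, ymin x), h1, Sym2.mem_mk_left _ _⟩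
    · exact (SimpleGraph.mem_edgeSet Grid).mpr (grid_adj_iff.mpr (Or.inr (Or.inr (Or.inr rfl))))
    · intro h
      exact h3 (Subgraph.mem_edgeSet.mp h).snd_mem
  have hT'sub : T' ⊆ edgeBoundary D := by
    rintro e ⟨x, hx, rfl⟩
    obtain ⟨-, h2, -, h4, -⟩ := hcolpack x hx.1 hx.2
    refine ⟨?_, ?_, (x, ymax x), h2, Sym2.mem_mk_left _ _⟩
    · exact (SimpleGraph.mem_edgeSet Grid).mpr (grid_adj_iff.mpr (Or.inr (Or.inr (Or.inl rfl))))
    · intro h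
      exact h4 (Subgraph.mem_edgeSet.mp h).snd_mem
  have hL'sub : L' ⊆ edgeBoundary D := by
    rintro e ⟨y, hy, rfl⟩
    obtain ⟨h1, -, h3, -, -⟩ := hrowpack y hy.1 hy.2
    refine ⟨?_, ?_, (xmin y, y), h1, Sym2.mem_mk_left _ _⟩
    · exact (SimpleGraph.mem_edgeSet Grid).mpr (grid_adj_iff.mpr (Or.inr (Or.inl rfl)))
    · intro h
      exact h3 (Subgraph.mem_edgeSet.mp h).snd_mem
  have hR'sub : R' ⊆ edgeBoundary D := by
    rintro e ⟨y, hy, rfl⟩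
    obtain ⟨-, h2, -, h4, -⟩ := hrowpack y hy.1 hy.2
    refine ⟨?_, ?_, (xmax y, y), h2, Sym2.mem_mk_left _ _⟩
    · exact (SimpleGraph.mem_edgeSet Grid).mpr (grid_adj_iff.mpr (Or.inl rfl))
    · intro h
      exact h4 (Subgraph.mem_edgeSet.mp h).snd_mem
  -- cardinalities
  have hIab : (Set.Icc a b).Finite := Set.finite_Icc a b
  have hIcd : (Set.Icc c d).Finite := Set.finite_Icc c d
  have cBot : Bot.ncard = (Set.Icc a b).ncard := Set.ncard_image_of_injOn (by
    intro x hx x' hx' h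
    simp only [Sym2.eq_iff, Prod.mk.injEq] at h
    omega)
  have cTop : Top.ncard = (Set.Icc a b).ncard := Set.ncard_image_of_injOn (by
    intro x hx x' hx' h
    simp only [Sym2.eq_iff, Prod.mk.injEq] at h
    omega)
  have cLft : Lft.ncard = (Set.Icc c d).ncard := Set.ncard_image_of_injOn (by
    intro x hx x' hx' h
    simp only [Sym2.eq_iff, Prod.mk.injEq] at h
    omega)
  have cRgt : Rgt.ncard = (Set.Icc c d).ncard := Set.ncard_image_of_injOn (by
    intro x hx x' hx' h
    simp only [Sym2.eq_iff, Prod.mk.injEq] at h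
    omega)
  have cB' : B'.ncard = (Set.Icc a b).ncard := Set.ncard_image_of_injOn (by
    intro x hx x' hx' h
    simp only [Sym2.eq_iff, Prod.mk.injEq] at h
    omega)
  have cT' : T'.ncard = (Set.Icc a b).ncard := Set.ncard_image_of_injOn (by
    intro x hx x' hx' h
    simp only [Sym2.eq_iff, Prod.mk.injEq] at h
    omega)
  have cL' : L'.ncard = (Set.Icc c d).ncard := Set.ncard_image_of_injOn (by
    intro x hx x' hx' h
    simp only [Sym2.eq_iff, Prod.mk.injEq] at h
    omega)
  have cR' : R'.ncard = (Set.Icc c d).ncard := Set.ncard_image_of_injOn (by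
    intro x hx x' hx' h
    simp only [Sym2.eq_iff, Prod.mk.injEq] at h
    omega)
  -- disjointness
  have dBT : Disjoint B' T' := by
    rw [Set.disjoint_left]
    rintro e ⟨x, hx, rfl⟩ ⟨x', hx', h⟩
    simp only [Sym2.eq_iff, Prod.mk.injEq] at h
    have hxx : x = x' := by tauto
    subst hxx
    have hle : ymin x ≤ ymax x := (hcolpack x hx.1 hx.2).2.2.2.2
    rcases h with h | h <;> omega
  have dBL : Disjoint B' L' := by
    rw [Set.disjoint_left]
    rintro e ⟨x, hx, rfl⟩ ⟨y, hy, h⟩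
    simp only [Sym2.eq_iff, Prod.mk.injEq] at h
    omega
  have dBR : Disjoint B' R' := by
    rw [Set.disjoint_left]
    rintro e ⟨x, hx, rfl⟩ ⟨y, hy, h⟩
    simp only [Sym2.eq_iff, Prod.mk.injEq] at h
    omega
  have dTL : Disjoint T' L' := by
    rw [Set.disjoint_left]
    rintro e ⟨x, hx, rfl⟩ ⟨y, hy, h⟩
    simp only [Sym2.eq_iff, Prod.mk.injEq] at h
    omega
  have dTR : Disjoint T' R' := by
    rw [Set.disjoint_left]
    rintro e ⟨x, hx, rfl⟩ ⟨y, hy, h⟩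
    simp only [Sym2.eq_iff, Prod.mk.injEq] at h
    omega
  have dLR : Disjoint L' R' := by
    rw [Set.disjoint_left]
    rintro e ⟨y, hy, rfl⟩ ⟨y', hy', h⟩
    simp only [Sym2.eq_iff, Prod.mk.injEq] at h
    have hyy : y = y' := by tauto
    subst hyy
    have hle : xmin y ≤ xmax y := (hrowpack y hy.1 hy.2).2.2.2.2
    rcases h with h | h <;> omega
  -- finiteness of families
  have fB' : B'.Finite := hIab.image _
  have fT' : T'.Finite := hIab.image _
  have fL' : L'.Finite := hIcd.image _
  have fR' : R'.Finite := hIcd.image _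
  have fBot : Bot.Finite := hIab.image _
  have fTop : Top.Finite := hIab.image _
  have fLft : Lft.Finite := hIcd.image _
  have fRgt : Rgt.Finite := hIcd.image _
  -- assemble
  have step1 : (edgeBoundary (bbox V)).ncard ≤ Bot.ncard + Top.ncard + Lft.ncard + Rgt.ncard := by
    calc (edgeBoundary (bbox V)).ncard ≤ (Bot ∪ Top ∪ Lft ∪ Rgt).ncard :=
          Set.ncard_le_ncard hsub1 (((fBot.union fTop).union fLft).union fRgt)
      _ ≤ (Bot ∪ Top ∪ Lft).ncard + Rgt.ncard := Set.ncard_union_le _ _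
      _ ≤ (Bot ∪ Top).ncard + Lft.ncard + Rgt.ncard := by
          have := Set.ncard_union_le (Bot ∪ Top) Lft
          omega
      _ ≤ Bot.ncard + Top.ncard + Lft.ncard + Rgt.ncard := by
          have := Set.ncard_union_le Bot Top
          omega
  have step2 : (B' ∪ T' ∪ L' ∪ R').ncard = B'.ncard + T'.ncard + L'.ncard + R'.ncard := by
    rw [Set.ncard_union_eq (by
        rw [Set.disjoint_union_left, Set.disjoint_union_left]
        exact ⟨⟨dBR, dTR⟩, dLR⟩) (((fB'.union fT').union fL')) fR',
      Set.ncard_union_eq (by rw [Set.disjoint_union_left]; exact ⟨dBL, dTL⟩)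
        (fB'.union fT') fL',
      Set.ncard_union_eq dBT fB' fT']
  have step3 : (B' ∪ T' ∪ L' ∪ R').ncard ≤ (edgeBoundary D).ncard := by
    apply Set.ncard_le_ncard _ (edgeBoundary_finite D hfin)
    intro e he
    rcases he with ((h | h) | h) | h
    · exact hB'sub h
    · exact hT'sub h
    · exact hL'sub h
    · exact hR'sub h
  omega
end

section
/- In bond percolation on Z^2 with parameter p, if p < p* (the critical probability for north-east oriented percolation on Z^2), then almost surely every open cluster of (Z^2)_p is barred, i.e., contains no infinite path using only two non-opposite directions (no infinite NE, NW, SE or SW path starting at any vertex). -/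
open SimpleGraph

open MeasureTheory ProbabilityTheory

/-- The open subgraph of `ℤ²` determined by a percolation configuration
`ω : Sym2 (ℤ × ℤ) → Bool`. -/
def openGraph (ω : Sym2 (ℤ × ℤ) → Bool) : SimpleGraph (ℤ × ℤ) where
  Adj u v := Grid.Adj u v ∧ ω s(u, v) = true
  symm := by
    constructor
    intro u v h
    refine ⟨Grid.adj_symm h.1, ?_⟩
    rw [Sym2.eq_swap]; exact h.2
  loopless := by constructor; intro u h; exact Grid.irrefl h.1

/-- There is an infinite north-east path in `H` starting at `w`. -/
def HasInfNEPath (H : SimpleGraph (ℤ × ℤ)) (w : ℤ × ℤ) : Prop :=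
  ∃ q : ℕ → ℤ × ℤ, q 0 = w ∧ ∀ i, H.Adj (q i) (q (i + 1)) ∧
    (q (i + 1) - q i = (1, 0) ∨ q (i + 1) - q i = (0, 1))

/-- There is an infinite unbarred (two non-opposite directions) path in `H`
starting at `w`. -/
def HasInfUnbarredPath (H : SimpleGraph (ℤ × ℤ)) (w : ℤ × ℤ) : Prop :=
  ∃ q : ℕ → ℤ × ℤ, q 0 = w ∧ (∃ a b : ℤ, (a = 1 ∨ a = -1) ∧ (b = 1 ∨ b = -1) ∧
    ∀ i, H.Adj (q i) (q (i + 1)) ∧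
      (q (i + 1) - q i = (a, 0) ∨ q (i + 1) - q i = (0, b)))

/-- A configuration is barred when no vertex starts an infinite unbarred open
path. -/
def Barred (H : SimpleGraph (ℤ × ℤ)) : Prop :=
  ∀ w : ℤ × ℤ, ¬ HasInfUnbarredPath H w

/-- `X` is a family of i.i.d. Bernoulli(`p`) indicators of the edges of `ℤ²`
under the probability measure `μ`: bond percolation with parameter `p`. -/
def IsBernoulliPerc (p : ℝ) {Ω : Type*} [MeasurableSpace Ω] (μ : Measure Ω)
    (X : Sym2 (ℤ × ℤ) → Ω → Bool) : Prop :=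
  IsProbabilityMeasure μ ∧ (∀ e, Measurable (X e)) ∧
    iIndepFun X μ ∧
    ∀ e ∈ Grid.edgeSet, μ {ω | X e ω = true} = ENNReal.ofReal p

/-- The critical probability `p*` for north-east oriented percolation on `ℤ²`: the
infimum of parameters `p` for which the origin starts an infinite open north-east
path with positive probability. -/
noncomputable def pstar : ℝ :=
  sInf {p : ℝ | 0 ≤ p ∧ p ≤ 1 ∧ ∃ (Ω : Type) (_ : MeasurableSpace Ω)
    (μ : Measure Ω) (X : Sym2 (ℤ × ℤ) → Ω → Bool), IsBernoulliPerc p μ X ∧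
    0 < μ {ω | HasInfNEPath (openGraph (fun e => X e ω)) (0, 0)}}

/-!
An unbarred path from `w` takes steps `(a, 0)` and `(0, b)` with `a, b = ±1`, so the lattice
automorphism `v ↦ (a v₁, b v₂) + w` pulls it back to a north-east path from the origin in the
configuration composed with that automorphism. Such a composition is again Bernoulli percolation
with parameter `p`, and for `p < p*` the origin almost surely starts no open north-east path. A
configuration that is not barred therefore lies in a countable union, over `w`, `a` and `b`, of
null events.
-/

def gridAut (w : ℤ × ℤ) (a b : ℤˣ) : Grid ≃g Grid where
  toEquiv := (Equiv.prodCongr (Units.mulLeft a) (Units.mulLeft b)).trans (Equiv.addRight w)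
  map_rel_iff' {u v} := by
    change |(a * u.1 + w.1) - (a * v.1 + w.1)| + |(b * u.2 + w.2) - (b * v.2 + w.2)| = 1 ↔
      |u.1 - v.1| + |u.2 - v.2| = 1
    simp only [add_sub_add_right_eq_sub, ← mul_sub, abs_mul, Int.isUnit_iff_abs_eq.1 a.isUnit,
      Int.isUnit_iff_abs_eq.1 b.isUnit, one_mul]

lemma gridAut_apply (w : ℤ × ℤ) (a b : ℤˣ) (v : ℤ × ℤ) :
    gridAut w a b v = (a * v.1, b * v.2) + w := rfl

lemma gridAut_add_mk (w : ℤ × ℤ) (a b : ℤˣ) (v : ℤ × ℤ) (x y : ℤ) :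
    gridAut w a b (v + (x, y)) = gridAut w a b v + (a * x, b * y) := by
  ext <;> simp only [gridAut_apply, Prod.fst_add, Prod.snd_add] <;> ring

lemma gridAut_symm_sub_eq_mk_iff (w : ℤ × ℤ) (a b : ℤˣ) (u v : ℤ × ℤ) (x y : ℤ) :
    (gridAut w a b).symm u - (gridAut w a b).symm v = (x, y) ↔ u - v = (a * x, b * y) := by
  rw [sub_eq_iff_eq_add', sub_eq_iff_eq_add', ← (gridAut w a b).apply_eq_iff_eq,
    RelIso.apply_symm_apply, gridAut_add_mk, RelIso.apply_symm_apply]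

lemma openGraph_comp_map_adj (ω : Sym2 (ℤ × ℤ) → Bool) (φ : Grid ≃g Grid) (u v : ℤ × ℤ) :
    (openGraph (ω ∘ Sym2.map φ)).Adj u v ↔ (openGraph ω).Adj (φ u) (φ v) :=
  and_congr φ.map_adj_iff.symm (by rw [Function.comp_apply, Sym2.map_mk])

lemma HasInfUnbarredPath.exists_hasInfNEPath {ω : Sym2 (ℤ × ℤ) → Bool} {w : ℤ × ℤ}
    (h : HasInfUnbarredPath (openGraph ω) w) :
    ∃ a b : ℤˣ, HasInfNEPath (openGraph (ω ∘ Sym2.map (gridAut w a b))) (0, 0) := by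
  obtain ⟨q, hq0, a, b, ha, hb, hq⟩ := h
  obtain ⟨a, rfl⟩ := Int.isUnit_iff.2 ha
  obtain ⟨b, rfl⟩ := Int.isUnit_iff.2 hb
  refine ⟨a, b, fun i => (gridAut w a b).symm (q i), ?_, fun i => ⟨?_, ?_⟩⟩
  · rw [RelIso.symm_apply_eq, hq0, gridAut_apply]
    simp
  · rw [openGraph_comp_map_adj, RelIso.apply_symm_apply, RelIso.apply_symm_apply]
    exact (hq i).1
  · simpa only [gridAut_symm_sub_eq_mk_iff, mul_one, mul_zero] using (hq i).2

section Bernoulli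

variable {p : ℝ} {Ω : Type*} [MeasurableSpace Ω] {μ : Measure Ω} {X : Sym2 (ℤ × ℤ) → Ω → Bool}

lemma IsBernoulliPerc.le_one (hX : IsBernoulliPerc p μ X) : p ≤ 1 := by
  have : IsProbabilityMeasure μ := hX.1
  have hedge : s(((0 : ℤ), (0 : ℤ)), (1, 0)) ∈ Grid.edgeSet := by
    change |(0 : ℤ) - 1| + |(0 : ℤ) - 0| = 1
    norm_num
  rw [← ENNReal.ofReal_le_one, ← hX.2.2.2 _ hedge]
  exact prob_le_one

lemma IsBernoulliPerc.comp_sym2Map (hX : IsBernoulliPerc p μ X) (φ : Grid ≃g Grid) :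
    IsBernoulliPerc p μ (fun e => X (Sym2.map φ e)) :=
  ⟨hX.1, fun _ => hX.2.1 _, hX.2.2.1.precomp (Sym2.map.injective φ.injective),
    fun _ he => hX.2.2.2 _ (Iso.map_mem_edgeSet_iff φ |>.2 he)⟩

lemma IsBernoulliPerc.map_eval (hX : IsBernoulliPerc p μ X) :
    IsBernoulliPerc p (μ.map fun ω e => X e ω) (fun e c => c e) := by
  obtain ⟨hprob, hmeas, hindep, hedge⟩ := hX
  have hF : Measurable fun ω e => X e ω := measurable_pi_lambda _ hmeas
  refine ⟨Measure.isProbabilityMeasure_map hF.aemeasurable, measurable_pi_apply, ?_,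
    fun e he => (Measure.map_apply hF (measurable_pi_apply e (measurableSet_singleton true))).trans
      (hedge e he)⟩
  have (e : Sym2 (ℤ × ℤ)) : IsProbabilityMeasure (μ.map (X e)) :=
    Measure.isProbabilityMeasure_map (hmeas e).aemeasurable
  rw [hindep.map_fun_eq_infinitePi_map hmeas]
  exact iIndepFun_infinitePi fun _ => measurable_id

-- `pstar` only ranges over `Ω : Type`, so the law is first moved to the canonical space.
lemma pstar_le (hp0 : 0 ≤ p) (hX : IsBernoulliPerc p μ X)
    (hpos : 0 < μ {ω | HasInfNEPath (openGraph fun e => X e ω) (0, 0)}) : pstar ≤ p :=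
  csInf_le ⟨0, fun _ h => h.1⟩ ⟨hp0, hX.le_one, _, _, _, _, hX.map_eval,
    hpos.trans_le (Measure.le_map_apply (measurable_pi_lambda _ hX.2.1).aemeasurable _)⟩

lemma IsBernoulliPerc.measure_hasInfNEPath_eq_zero (hp0 : 0 ≤ p) (hp : p < pstar)
    (hX : IsBernoulliPerc p μ X) :
    μ {ω | HasInfNEPath (openGraph fun e => X e ω) (0, 0)} = 0 := by
  by_contra h
  exact (pstar_le hp0 hX (pos_iff_ne_zero.2 h)).not_gt hp

end Bernoulli

/-- If `p < p*`, then almost surely every open cluster of bond percolation on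
`ℤ²` with parameter `p` is barred. -/
theorem ae_barred_of_lt_pstar (p : ℝ) (hp0 : 0 ≤ p) (hp : p < pstar)
    {Ω : Type*} [MeasurableSpace Ω] (μ : Measure Ω)
    (X : Sym2 (ℤ × ℤ) → Ω → Bool) (hX : IsBernoulliPerc p μ X) :
    μ {ω | Barred (openGraph (fun e => X e ω))} = 1 := by
  have : IsProbabilityMeasure μ := hX.1
  have hnull (z : (ℤ × ℤ) × ℤˣ × ℤˣ) : μ {ω | HasInfNEPath
      (openGraph ((fun e => X e ω) ∘ Sym2.map (gridAut z.1 z.2.1 z.2.2))) (0, 0)} = 0 :=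
    (hX.comp_sym2Map _).measure_hasInfNEPath_eq_zero hp0 hp
  have hcompl : μ {ω | Barred (openGraph (fun e => X e ω))}ᶜ = 0 := by
    refine measure_mono_null (fun ω hω => ?_) (measure_iUnion_null hnull)
    obtain ⟨w, hw⟩ := not_forall_not.1 hω
    obtain ⟨a, b, hab⟩ := hw.exists_hasInfNEPath
    exact Set.mem_iUnion.2 ⟨(w, a, b), hab⟩
  rw [measure_of_measure_compl_eq_zero hcompl, measure_univ]
end
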